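/- arXiv:2005.03308 — 3 statements merged into one kernel-verified Lean document; each statement's English description precedes it below -/
import Mathlib

section
/- Fix an integer k ≥ 1 and b = (b₀,…,b_{k−1}) ∈ ℝ^k, and set ψ_{m,b} := Σ_{j=0}^{k−1} b_j ψ_{m,3^j} and f_b(u) := Σ_{j=0}^{k−1} b_j cos(3^j θ_{a(b),3}) u^{3^j}. Then for every integer m ≥ 1 and every y ∈ SL(2,ℝ): |ψ_{m,b}(y)| ≤ 3^{k−1} · (cosh(‖y‖/2))^{−2m} · f_b(tanh(‖y‖/2)). -/
open Real

noncomputable section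

abbrev SL2 := Matrix.SpecialLinearGroup (Fin 2) ℝ

/-- inverse hyperbolic cosine -/
def acosh (x : ℝ) : ℝ := Real.log (x + Real.sqrt (x ^ 2 - 1))

/-- the "pseudo-distance from the origin" ‖g‖ = arcosh((g₁₁²+g₁₂²+g₂₁²+g₂₂²)/2) -/
def gnorm (g : SL2) : ℝ :=
  acosh ((g.1 0 0 ^ 2 + g.1 0 1 ^ 2 + g.1 1 0 ^ 2 + g.1 1 1 ^ 2) / 2)

def z1 (x : SL2) : ℂ :=
  (((x.1 0 0 + x.1 1 1 : ℝ) : ℂ) + Complex.I * ((x.1 1 0 - x.1 0 1 : ℝ) : ℂ)) / 2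

def z2 (x : SL2) : ℂ :=
  (((x.1 0 1 + x.1 1 0 : ℝ) : ℂ) + Complex.I * ((x.1 0 0 - x.1 1 1 : ℝ) : ℂ)) / 2

/-- the spherical function ψ_{m,k}(x) = z₁(x)^{-(k+2m)} z₂(x)^k -/
def psi (m k : ℕ) (x : SL2) : ℂ := z1 x ^ (-(k + 2 * m : ℤ)) * z2 x ^ k

/-- γ is central iff both components are ±1 -/
def IsCentral (γ : SL2 × SL2) : Prop :=
  (γ.1.1 = 1 ∨ γ.1.1 = -1) ∧ (γ.2.1 = 1 ∨ γ.2.1 = -1)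

/-- ε_Γ -/
def epsGamma (Γ : Set (SL2 × SL2)) : ℝ :=
  (1 / 3) * sInf {r | ∃ γ ∈ Γ, ¬IsCentral γ ∧ r = |gnorm γ.1 - gnorm γ.2|}

/-- the set counted by N_Γ(x,R) -/
def orbitSet (Γ : Set (SL2 × SL2)) (x : SL2) (R : ℝ) : Set (SL2 × SL2) :=
  {γ | γ ∈ Γ ∧ gnorm (γ.1 * x * γ.2⁻¹) ≤ R}

/-- the constant m(C,α,ε,s) -/
def mConst (C α ε : ℝ) (s : ℕ) : ℝ :=
  (Real.log 2 * s + 2 * α * ε + Real.log (1 + 2 ^ s * C * Real.exp (6 * α * ε))) /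
    Real.log (Real.cosh ε)

def chi (x : ℝ) : ℝ := if x = 1 then 0 else 1

/-- θ_{a,N} for a tuple a of length k (with the convention a_{-1} = 1) -/
def thetaAN (a : ℕ → ℝ) (k : ℕ) (N : ℝ) : ℝ :=
  Real.pi * ∑ i ∈ Finset.range k,
    (chi (a i) - if i = 0 then 0 else chi (a (i - 1))) * N ^ (-(i : ℤ))

/-- the sign tuple a(b) attached to b -/
def signOf (b : ℕ → ℝ) (j : ℕ) : ℝ := if 0 ≤ b j then 1 else -1

/-- ψ_{m,b} = Σ_{j<k} b_j ψ_{m,3^j} -/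
def psiB (m k : ℕ) (b : ℕ → ℝ) (x : SL2) : ℂ :=
  ∑ j ∈ Finset.range k, (b j : ℂ) * psi m (3 ^ j) x

/-- f_b(u) = Σ_{j<k} b_j cos(3^j θ_{a(b),3}) u^{3^j} -/
def fb (k : ℕ) (b : ℕ → ℝ) (u : ℝ) : ℝ :=
  ∑ j ∈ Finset.range k, b j * Real.cos (3 ^ j * thetaAN (signOf b) k 3) * u ^ 3 ^ j

/-- the rotation matrix k(θ) -/
def kMat (θ : ℝ) : SL2 :=
  ⟨!![Real.cos θ, -Real.sin θ; Real.sin θ, Real.cos θ], by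
    simp [Matrix.det_fin_two_of]
    nlinarith [Real.sin_sq_add_cos_sq θ]⟩

/-- the diagonal matrix a(t) -/
def aMat (t : ℝ) : SL2 :=
  ⟨!![Real.exp t, 0; 0, Real.exp (-t)], by
    simp [Matrix.det_fin_two_of, ← Real.exp_add]⟩

end
noncomputable section
lemma cosh_acosh {x : ℝ} (hx : 1 ≤ x) : Real.cosh (acosh x) = x := by
  have hx2 : (0:ℝ) ≤ x ^ 2 - 1 := by nlinarith
  have hs : Real.sqrt (x ^ 2 - 1) ^ 2 = x ^ 2 - 1 := Real.sq_sqrt hx2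
  have hsn : 0 ≤ Real.sqrt (x ^ 2 - 1) := Real.sqrt_nonneg _
  have hy0 : (0:ℝ) < x + Real.sqrt (x ^ 2 - 1) := by linarith
  have hinv : (x + Real.sqrt (x ^ 2 - 1))⁻¹ = x - Real.sqrt (x ^ 2 - 1) :=
    inv_eq_of_mul_eq_one_right (by nlinarith)
  rw [acosh, Real.cosh_eq, Real.exp_log hy0, Real.exp_neg, Real.exp_log hy0, hinv]
  ring

lemma acosh_nonneg {x : ℝ} (hx : 1 ≤ x) : 0 ≤ acosh x := by
  apply Real.log_nonneg
  have := Real.sqrt_nonneg (x ^ 2 - 1); linarith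
end
noncomputable section
lemma abs_z1_sq (y : SL2) :
    ‖z1 y‖ ^ 2 = ((y.1 0 0 + y.1 1 1) ^ 2 + (y.1 1 0 - y.1 0 1) ^ 2) / 4 := by
  have h : z1 y = Complex.ofReal ((y.1 0 0 + y.1 1 1)) / 2
      + Complex.ofReal ((y.1 1 0 - y.1 0 1)) / 2 * Complex.I := by
    rw [z1]; push_cast; ring
  rw [h, Complex.sq_norm, Complex.normSq_apply]
  simp [Complex.add_re, Complex.add_im, Complex.div_ofNat_re, Complex.div_ofNat_im]
  ring

lemma abs_z2_sq (y : SL2) :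
    ‖z2 y‖ ^ 2 = ((y.1 0 1 + y.1 1 0) ^ 2 + (y.1 0 0 - y.1 1 1) ^ 2) / 4 := by
  have h : z2 y = Complex.ofReal ((y.1 0 1 + y.1 1 0)) / 2
      + Complex.ofReal ((y.1 0 0 - y.1 1 1)) / 2 * Complex.I := by
    rw [z2]; push_cast; ring
  rw [h, Complex.sq_norm, Complex.normSq_apply]
  simp [Complex.add_re, Complex.add_im, Complex.div_ofNat_re, Complex.div_ofNat_im]
  ring

lemma det_entries (y : SL2) : y.1 0 0 * y.1 1 1 - y.1 0 1 * y.1 1 0 = 1 := by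
  have := y.2
  rwa [Matrix.det_fin_two] at this

lemma abs_z_sub (y : SL2) : ‖z1 y‖ ^ 2 - ‖z2 y‖ ^ 2 = 1 := by
  rw [abs_z1_sq, abs_z2_sq]
  linear_combination det_entries y

lemma abs_z_add (y : SL2) : ‖z1 y‖ ^ 2 + ‖z2 y‖ ^ 2 =
    (y.1 0 0 ^ 2 + y.1 0 1 ^ 2 + y.1 1 0 ^ 2 + y.1 1 1 ^ 2) / 2 := by
  rw [abs_z1_sq, abs_z2_sq]; ring

lemma cosh_half_gnorm (y : SL2) :
    Real.cosh (gnorm y / 2) = ‖z1 y‖ ∧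
      Real.sinh (gnorm y / 2) = ‖z2 y‖ ∧ 0 ≤ gnorm y := by
  set c := ‖z1 y‖ with hc
  set s := ‖z2 y‖ with hs
  have hsub := abs_z_sub y
  have hsn : 0 ≤ s := norm_nonneg _
  have hcn : 0 ≤ c := norm_nonneg _
  have h1 : 1 ≤ (y.1 0 0 ^ 2 + y.1 0 1 ^ 2 + y.1 1 0 ^ 2 + y.1 1 1 ^ 2) / 2 := by
    have := abs_z_add y
    nlinarith
  have hg0 : 0 ≤ gnorm y := acosh_nonneg h1
  have hcoshg : Real.cosh (gnorm y) = c ^ 2 + s ^ 2 := by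
    rw [gnorm, cosh_acosh h1, abs_z_add y]
  have h2 : gnorm y = 2 * (gnorm y / 2) := by ring
  rw [h2, Real.cosh_two_mul] at hcoshg
  set t := gnorm y / 2 with ht
  have hpyth := Real.cosh_sq_sub_sinh_sq t
  have hch2 : Real.cosh t ^ 2 = c ^ 2 := by nlinarith
  have hsh2 : Real.sinh t ^ 2 = s ^ 2 := by nlinarith
  have hshn : 0 ≤ Real.sinh t := Real.sinh_nonneg_iff.mpr (by positivity)
  have hchn : 0 ≤ Real.cosh t := (Real.cosh_pos t).le
  refine ⟨?_, ?_, hg0⟩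
  · rw [← Real.sqrt_sq hchn, hch2, Real.sqrt_sq hcn]
  · rw [← Real.sqrt_sq hshn, hsh2, Real.sqrt_sq hsn]
end
noncomputable section
lemma psi_abs (m K : ℕ) (y : SL2) :
    ‖psi m K y‖ =
      Real.cosh (gnorm y / 2) ^ (-(2 * m : ℤ)) * Real.tanh (gnorm y / 2) ^ K := by
  obtain ⟨hc, hs, hg⟩ := cosh_half_gnorm y
  set t := gnorm y / 2 with ht
  have hcpos : 0 < Real.cosh t := Real.cosh_pos t
  rw [psi, norm_mul, norm_zpow, norm_pow, ← hc, ← hs, Real.tanh_eq_sinh_div_cosh,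
    div_pow]
  have : Real.cosh t ^ (-(K + 2 * m : ℤ)) =
      Real.cosh t ^ (-(2 * m : ℤ)) * (Real.cosh t ^ K)⁻¹ := by
    rw [← zpow_natCast (Real.cosh t) K, ← zpow_neg, ← zpow_add₀ hcpos.ne']
    ring_nf
  rw [this]
  ring

lemma tanh_half_gnorm_nonneg (y : SL2) : 0 ≤ Real.tanh (gnorm y / 2) := by
  obtain ⟨hc, hs, hg⟩ := cosh_half_gnorm y
  rw [Real.tanh_eq_sinh_div_cosh]
  exact div_nonneg (Real.sinh_nonneg_iff.mpr (by positivity)) (Real.cosh_pos _).le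
end
noncomputable section
lemma trig_bound (k : ℕ) (hk : 1 ≤ k) (b : ℕ → ℝ) (j : ℕ) (hj : j < k) :
    |b j| ≤ 3 ^ (k - 1) * (b j * Real.cos ((3:ℝ) ^ j * thetaAN (signOf b) k 3)) := by
  classical
  set e : ℕ → ℤ := fun i => if 0 ≤ b i then 0 else 1 with he
  have hchi : ∀ i, chi (signOf b i) = (e i : ℝ) := by
    intro i
    simp only [chi, signOf, he]
    by_cases h : 0 ≤ b i <;> simp [h] <;> norm_num
  set cc : ℕ → ℤ := fun i => e i - if i = 0 then 0 else e (i - 1) with hcc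
  -- rewrite the angle
  have hθ : (3:ℝ) ^ j * thetaAN (signOf b) k 3 =
      Real.pi * ∑ i ∈ Finset.range k, (cc i : ℝ) * (3:ℝ) ^ ((j:ℤ) - i) := by
    rw [thetaAN, ← mul_assoc, mul_comm ((3:ℝ)^j) Real.pi, mul_assoc, Finset.mul_sum]
    congr 1
    apply Finset.sum_congr rfl
    intro i _
    have h3 : (3:ℝ) ^ ((j:ℤ) - (i:ℤ)) = (3:ℝ) ^ (j:ℤ) * (3:ℝ) ^ (-(i:ℤ)) := by
      rw [← zpow_add₀ (by norm_num : (3:ℝ) ≠ 0)]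
      ring_nf
    rw [hchi i, hcc]
    rw [show ((e i - if i = 0 then 0 else e (i-1) : ℤ) : ℝ)
        = (e i : ℝ) - (if i = 0 then (0:ℝ) else (e (i-1) : ℝ)) by
      split <;> push_cast <;> ring]
    rw [show (if i = 0 then (0:ℝ) else chi (signOf b (i-1)))
        = (if i = 0 then (0:ℝ) else (e (i-1):ℝ)) from by split <;> simp [hchi]]
    rw [h3, zpow_natCast]
    ring
  -- parity of the head sum
  have hA : ∀ J : ℕ, ∃ n : ℤ,
      ∑ i ∈ Finset.range (J+1), cc i * 3 ^ (J - i) = 2 * n + e J := by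
    intro J
    induction J with
    | zero => exact ⟨0, by simp [hcc]⟩
    | succ J ih =>
      obtain ⟨n, hn⟩ := ih
      refine ⟨3 * n + e J, ?_⟩
      rw [Finset.sum_range_succ]
      have hstep : ∑ i ∈ Finset.range (J+1), cc i * 3 ^ (J + 1 - i)
          = 3 * ∑ i ∈ Finset.range (J+1), cc i * 3 ^ (J - i) := by
        rw [Finset.mul_sum]
        apply Finset.sum_congr rfl
        intro i hi
        have hiJ : i ≤ J := Nat.lt_succ_iff.mp (Finset.mem_range.mp hi)
        have : J + 1 - i = (J - i) + 1 := by omega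
        rw [this, pow_succ]
        ring
      rw [hstep, hn]
      have hccJ : cc (J+1) = e (J+1) - e J := by simp [hcc]
      rw [hccJ, Nat.sub_self, pow_zero]
      ring
  -- split the sum
  have hj1 : j + 1 ≤ k := hj
  have hsplit : ∑ i ∈ Finset.range k, (cc i : ℝ) * (3:ℝ) ^ ((j:ℤ) - i)
      = (∑ i ∈ Finset.range (j+1), (cc i : ℝ) * (3:ℝ) ^ ((j:ℤ) - i))
        + ∑ i ∈ Finset.Ico (j+1) k, (cc i : ℝ) * (3:ℝ) ^ ((j:ℤ) - i) := by
    simp only [Finset.range_eq_Ico]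
    exact (Finset.sum_Ico_consecutive _ (Nat.zero_le (j+1)) hj1).symm
  have hfirst : ∑ i ∈ Finset.range (j+1), (cc i : ℝ) * (3:ℝ) ^ ((j:ℤ) - i)
      = ((∑ i ∈ Finset.range (j+1), cc i * 3 ^ (j - i) : ℤ) : ℝ) := by
    push_cast
    apply Finset.sum_congr rfl
    intro i hi
    have hiJ : i ≤ j := Nat.lt_succ_iff.mp (Finset.mem_range.mp hi)
    congr 1
    rw [← zpow_natCast (3:ℝ) (j - i)]
    congr 1
    omega
  set B : ℝ := ∑ i ∈ Finset.Ico (j+1) k, (cc i : ℝ) * (3:ℝ) ^ ((j:ℤ) - i) with hB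
  obtain ⟨n, hn⟩ := hA j
  -- the cosine value
  have hcos : Real.cos ((3:ℝ) ^ j * thetaAN (signOf b) k 3)
      = Real.cos (Real.pi * B + (e j : ℝ) * Real.pi) := by
    rw [hθ, hsplit, hfirst, hn]
    have : Real.pi * (((2 * n + e j : ℤ) : ℝ) + B)
        = (Real.pi * B + (e j : ℝ) * Real.pi) + n * (2 * Real.pi) := by
      push_cast
      ring
    rw [this, Real.cos_add_int_mul_two_pi]
  -- bound on |B|
  set ε : ℝ := (1/3 : ℝ) ^ (k - 1) with hε
  have hεpos : 0 < ε := by positivity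
  have hε1 : ε ≤ 1 := pow_le_one₀ (by norm_num) (by norm_num)
  have hBle : |B| ≤ (1 - ε) / 2 := by
    have h1 : |B| ≤ ∑ i ∈ Finset.Ico (j+1) k, (3:ℝ) ^ ((j:ℤ) - i) := by
      refine (Finset.abs_sum_le_sum_abs _ _).trans ?_
      apply Finset.sum_le_sum
      intro i _
      rw [abs_mul, abs_of_pos (zpow_pos (by norm_num : (0:ℝ) < 3) ((j:ℤ) - i))]
      have hcc1 : |(cc i : ℝ)| ≤ 1 := by
        have : |cc i| ≤ 1 := by
          simp only [hcc, he]
          split_ifs <;> norm_num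
        exact_mod_cast this
      nlinarith [zpow_pos (by norm_num : (0:ℝ) < 3) ((j:ℤ) - i)]
    have h2 : ∑ i ∈ Finset.Ico (j+1) k, (3:ℝ) ^ ((j:ℤ) - i)
        = (1 - (1/3:ℝ) ^ (k - (j+1))) / 2 := by
      rw [Finset.sum_Ico_eq_sum_range]
      have : ∀ t ∈ Finset.range (k - (j+1)),
          (3:ℝ) ^ ((j:ℤ) - ((j + 1 + t : ℕ) : ℤ)) = (1/3 : ℝ) * (1/3 : ℝ) ^ t := by
        intro t _
        have hexp : (j:ℤ) - ((j + 1 + t : ℕ) : ℤ) = -(((1 + t : ℕ) : ℤ)) := by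
          push_cast; ring
        rw [hexp, zpow_neg, zpow_natCast, pow_add, pow_one, mul_inv]
        simp [one_div, inv_pow]
      rw [Finset.sum_congr rfl this, ← Finset.mul_sum,
        geom_sum_eq (by norm_num : (1/3:ℝ) ≠ 1)]
      ring
    have h3 : ε ≤ (1/3:ℝ) ^ (k - (j+1)) := by
      apply pow_le_pow_of_le_one (by norm_num) (by norm_num)
      omega
    rw [h2] at h1
    linarith
  -- lower bound for cos (π B)
  have hπ := Real.pi_pos
  have hcosB : ε ≤ Real.cos (Real.pi * B) := by
    have h1 : |Real.pi * B| ≤ Real.pi/2 - Real.pi/2 * ε := by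
      rw [abs_mul, abs_of_pos hπ]
      nlinarith [hBle, abs_nonneg B]
    have h3 : Real.cos (Real.pi/2 - Real.pi/2 * ε) ≤ Real.cos |Real.pi * B| :=
      Real.cos_le_cos_of_nonneg_of_le_pi (abs_nonneg _) (by nlinarith) h1
    have h4 : Real.cos (Real.pi/2 - Real.pi/2 * ε) = Real.sin (Real.pi/2 * ε) :=
      Real.cos_pi_div_two_sub _
    have h5 : ε ≤ Real.sin (Real.pi/2 * ε) := Real.le_sin_mul hεpos.le hε1
    rw [← Real.cos_abs (Real.pi * B)]
    linarith
  have h31 : (3:ℝ) ^ (k-1) * ε = 1 := by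
    rw [hε, ← mul_pow]
    norm_num
  have hkey : b j * Real.cos ((3:ℝ) ^ j * thetaAN (signOf b) k 3)
      = |b j| * Real.cos (Real.pi * B) := by
    by_cases hbj : 0 ≤ b j
    · have hej : e j = 0 := by simp [he, hbj]
      rw [hcos, hej, abs_of_nonneg hbj]
      norm_num
    · have hej : e j = 1 := by simp [he, hbj]
      rw [hcos, hej, abs_of_neg (lt_of_not_ge hbj)]
      push_cast
      rw [one_mul, Real.cos_add_pi]
      ring
  rw [hkey]
  have hpow : (0:ℝ) < 3 ^ (k-1) := by positivity
  nlinarith [abs_nonneg (b j), hcosB, h31,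
    mul_le_mul_of_nonneg_left hcosB (mul_nonneg hpow.le (abs_nonneg (b j)))]
end
theorem stmt3 (k : ℕ) (hk : 1 ≤ k) (b : ℕ → ℝ) (m : ℕ) (hm : 1 ≤ m) (y : SL2) :
    ‖psiB m k b y‖ ≤
      3 ^ (k - 1) * Real.cosh (gnorm y / 2) ^ (-(2 * m : ℤ)) *
        fb k b (Real.tanh (gnorm y / 2)) := by
  have hu : 0 ≤ Real.tanh (gnorm y / 2) := tanh_half_gnorm_nonneg y
  set t := gnorm y / 2 with ht
  set u := Real.tanh t with hudef
  have hcosh : (0:ℝ) < Real.cosh t ^ (-(2*m:ℤ)) := zpow_pos (Real.cosh_pos t) _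
  calc ‖psiB m k b y‖
      ≤ ∑ j ∈ Finset.range k, ‖(b j : ℂ) * psi m (3^j) y‖ :=
        norm_sum_le _ _
    _ = ∑ j ∈ Finset.range k, |b j| * (Real.cosh t ^ (-(2*m:ℤ)) * u ^ 3^j) := by
        apply Finset.sum_congr rfl
        intro j _
        rw [norm_mul, Complex.norm_real, Real.norm_eq_abs, psi_abs]
    _ ≤ ∑ j ∈ Finset.range k, Real.cosh t ^ (-(2*m:ℤ)) *
          (3^(k-1) * (b j * Real.cos ((3:ℝ)^j * thetaAN (signOf b) k 3)) * u ^ 3^j) := by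
        apply Finset.sum_le_sum
        intro j hj
        have h := trig_bound k hk b j (Finset.mem_range.mp hj)
        have hup : (0:ℝ) ≤ u ^ 3^j := pow_nonneg hu _
        nlinarith [mul_le_mul_of_nonneg_left (mul_le_mul_of_nonneg_right h hup) hcosh.le]
    _ = 3^(k-1) * Real.cosh t ^ (-(2*m:ℤ)) * fb k b u := by
        rw [fb, Finset.mul_sum]
        apply Finset.sum_congr rfl
        intro j _
        ring
end

section
/- Let C, α, ε > 0 and s ∈ ℕ. For every integer m > m(C,α,ε,s) and every nonzero one-variable polynomial f of degree at most s with non-negative real coefficients, the series Σ_{n=1}^∞ e^{4α(n+1)ε} (cosh 2nε)^{−m} f(tanh 2(n+1)ε) converges and C · Σ_{n=1}^∞ e^{4α(n+1)ε} (cosh 2nε)^{−m} f(tanh 2(n+1)ε) < (cosh ε)^{−m} f(tanh ε). -/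
open Real

/-!
Write `E = exp (2αε)`, `r = (cosh ε)⁻ᵐ` and `F = f (tanh ε)`. Since `(cosh ε)ᵏ ≤ cosh (kε)`, and
since `tanh` is subadditive on `[0, ∞)` so that `f (tanh (kε)) ≤ kˢ F`, the `n`-th term is at most
`(2ˢ)ⁿ⁺² E²⁽ⁿ⁺²⁾ r²⁽ⁿ⁺¹⁾ F = 2ˢ E² F qⁿ⁺¹` with `q = 2ˢ E² r²` (using `2(n + 2) ≤ 2ⁿ⁺²`).
Exponentiated, `m > m(C,α,ε,s)` reads `x (1 + 2ˢ C E³) < 1` with `x = 2ˢ E r`; as `q ≤ x (E r) ≤ x`,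
this gives `q < 1` and `C · 2ˢ E² q / (1 - q) < r`, i.e. `C` times the geometric majorant is
below `r F`.
-/

namespace Real

lemma tanh_nonneg {x : ℝ} (hx : 0 ≤ x) : 0 ≤ tanh x := by
  rw [tanh_eq_sinh_div_cosh]
  exact div_nonneg (sinh_nonneg_iff.mpr hx) (cosh_pos x).le

lemma tanh_pos {x : ℝ} (hx : 0 < x) : 0 < tanh x := by
  rw [tanh_eq_sinh_div_cosh]
  exact div_pos (sinh_pos_iff.mpr hx) (cosh_pos x)

lemma tanh_add_le_add {a b : ℝ} (ha : 0 ≤ a) (hb : 0 ≤ b) :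
    tanh (a + b) ≤ tanh a + tanh b := by
  have hsa := sinh_nonneg_iff.mpr ha
  have hsb := sinh_nonneg_iff.mpr hb
  have hca := cosh_pos a
  have hcb := cosh_pos b
  have hsum : tanh a + tanh b = (sinh a * cosh b + cosh a * sinh b) / (cosh a * cosh b) := by
    rw [tanh_eq_sinh_div_cosh, tanh_eq_sinh_div_cosh]
    field_simp
  rw [hsum, tanh_eq_sinh_div_cosh, sinh_add, cosh_add]
  gcongr
  nlinarith [mul_nonneg hsa hsb]

lemma tanh_natCast_mul_le {t : ℝ} (ht : 0 ≤ t) (k : ℕ) : tanh (k * t) ≤ k * tanh t := by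
  induction k with
  | zero => simp
  | succ k ih =>
    calc tanh ((k + 1 : ℕ) * t) = tanh (k * t + t) := by push_cast; ring_nf
      _ ≤ tanh (k * t) + tanh t := tanh_add_le_add (by positivity) ht
      _ ≤ (k + 1 : ℕ) * tanh t := by push_cast; linarith

lemma cosh_pow_le_cosh_natCast_mul (t : ℝ) (k : ℕ) : cosh t ^ k ≤ cosh (k * t) := by
  wlog ht : 0 ≤ t
  · simpa [mul_neg] using this (-t) k (by linarith)
  induction k with
  | zero => simp
  | succ k ih =>
    have hs : 0 ≤ sinh (k * t) * sinh t :=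
      mul_nonneg (sinh_nonneg_iff.mpr (by positivity)) (sinh_nonneg_iff.mpr ht)
    calc cosh t ^ (k + 1) = cosh t ^ k * cosh t := pow_succ _ _
      _ ≤ cosh (k * t) * cosh t := by gcongr
      _ ≤ cosh (k * t + t) := by rw [cosh_add]; linarith
      _ = cosh ((k + 1 : ℕ) * t) := by push_cast; ring_nf

end Real

namespace Polynomial

variable {R : Type*} [CommRing R] [LinearOrder R] [IsStrictOrderedRing R] {f : Polynomial R}

lemma eval_nonneg_of_coeff_nonneg (hf : ∀ i, 0 ≤ f.coeff i) {u : R} (hu : 0 ≤ u) :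
    0 ≤ f.eval u := by
  rw [eval_eq_sum_range]
  exact Finset.sum_nonneg fun i _ => mul_nonneg (hf i) (pow_nonneg hu i)

lemma eval_pos_of_coeff_nonneg (hf : ∀ i, 0 ≤ f.coeff i) (hf0 : f ≠ 0) {u : R} (hu : 0 < u) :
    0 < f.eval u := by
  rw [eval_eq_sum_range]
  refine Finset.sum_pos' (fun i _ => mul_nonneg (hf i) (pow_nonneg hu.le i))
    ⟨f.natDegree, Finset.self_mem_range_succ _, mul_pos ?_ (pow_pos hu _)⟩
  exact (hf _).lt_of_ne' (leadingCoeff_ne_zero.mpr hf0)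

lemma eval_le_pow_mul_eval_of_coeff_nonneg (hf : ∀ i, 0 ≤ f.coeff i) {s : ℕ}
    (hdeg : f.natDegree ≤ s) {K u v : R} (hK : 1 ≤ K) (hu : 0 ≤ u) (huv : u ≤ K * v) :
    f.eval u ≤ K ^ s * f.eval v := by
  have hv : 0 ≤ v := nonneg_of_mul_nonneg_right (hu.trans huv) (by linarith)
  rw [eval_eq_sum_range, eval_eq_sum_range, Finset.mul_sum]
  refine Finset.sum_le_sum fun i hi => ?_
  have his : i ≤ s := (Nat.lt_succ_iff.mp (Finset.mem_range.mp hi)).trans hdeg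
  calc f.coeff i * u ^ i ≤ f.coeff i * (K ^ i * v ^ i) := by
        rw [← mul_pow]; gcongr; exact hf i
    _ ≤ f.coeff i * (K ^ s * v ^ i) := by gcongr; exact hf i
    _ = K ^ s * (f.coeff i * v ^ i) := by ring

end Polynomial

lemma Polynomial.eval_tanh_natCast_mul_le {f : Polynomial ℝ} (hf : ∀ i, 0 ≤ f.coeff i) {s : ℕ}
    (hdeg : f.natDegree ≤ s) {t : ℝ} (ht : 0 ≤ t) {k : ℕ} (hk : 1 ≤ k) :
    f.eval (tanh (k * t)) ≤ k ^ s * f.eval (tanh t) :=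
  eval_le_pow_mul_eval_of_coeff_nonneg hf hdeg (by exact_mod_cast hk)
    (tanh_nonneg (by positivity)) (tanh_natCast_mul_le ht k)

lemma summable_and_tsum_le_of_le_geometric {a : ℕ → ℝ} {c q : ℝ} (ha : ∀ n, 0 ≤ a n)
    (hq0 : 0 ≤ q) (hq1 : q < 1) (h : ∀ n, a n ≤ c * q ^ n) :
    Summable a ∧ ∑' n, a n ≤ c / (1 - q) := by
  have hg : Summable fun n => c * q ^ n := (summable_geometric_of_lt_one hq0 hq1).mul_left c
  have hs : Summable a := hg.of_nonneg_of_le ha h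
  refine ⟨hs, ?_⟩
  calc ∑' n, a n ≤ ∑' n, c * q ^ n := hs.tsum_le_tsum h hg
    _ = c / (1 - q) := by rw [tsum_mul_left, tsum_geometric_of_lt_one hq0 hq1, div_eq_mul_inv]

lemma two_mul_add_two_le_two_pow (n : ℕ) : 2 * (n + 2) ≤ 2 ^ (n + 2) := by
  have := Nat.lt_two_pow_self (n := n + 1)
  rw [pow_succ]
  omega

lemma mul_inv_cosh_pow_lt_one_of_mConst_lt {C α ε : ℝ} {s m : ℕ} (hC : 0 ≤ C) (hε : 0 < ε)
    (hm : mConst C α ε s < m) :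
    2 ^ s * exp (2 * α * ε) * (1 + 2 ^ s * C * exp (2 * α * ε) ^ 3) * (cosh ε ^ m)⁻¹ < 1 := by
  have hcosh : 1 < cosh ε := one_lt_cosh.mpr hε.ne'
  rw [mConst, div_lt_iff₀ (log_pos hcosh)] at hm
  have hexp : exp (2 * α * ε) ^ 3 = exp (6 * α * ε) := by rw [← exp_nat_mul]; ring_nf
  rw [mul_inv_lt_iff₀ (by positivity), one_mul, hexp,
    ← log_lt_log_iff (by positivity) (by positivity), log_mul (by positivity) (by positivity),
    log_mul (by positivity) (by positivity), log_pow, log_pow, log_exp]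
  linarith

lemma geometric_ratio_lt_one_and_mul_lt {C t E r : ℝ} (hC : 0 ≤ C) (ht : 1 ≤ t) (hE : 0 < E)
    (hr : 0 < r) (h : t * E * (1 + t * C * E ^ 3) * r < 1) :
    t * E ^ 2 * r ^ 2 < 1 ∧
      C * (t * E ^ 2) * (t * E ^ 2 * r ^ 2) / (1 - t * E ^ 2 * r ^ 2) < r := by
  set x := t * E * r
  have hx : x + x * (t * C * E ^ 3) < 1 := by
    linarith [show t * E * (1 + t * C * E ^ 3) * r = x + x * (t * C * E ^ 3) by ring]
  have hxC : 0 ≤ x * (t * C * E ^ 3) := by positivity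
  have hEr : E * r ≤ x := le_mul_of_one_le_left (by positivity) ht |>.trans_eq (by ring)
  have hq : t * E ^ 2 * r ^ 2 ≤ x := by
    have : t * E ^ 2 * r ^ 2 = x * (E * r) := by ring
    rw [this]
    exact mul_le_of_le_one_right (by positivity) (by linarith)
  refine ⟨by linarith, ?_⟩
  rw [div_lt_iff₀ (by linarith)]
  calc C * (t * E ^ 2) * (t * E ^ 2 * r ^ 2) = r * (x * (t * C * E ^ 3)) := by ring
    _ < r * (1 - t * E ^ 2 * r ^ 2) := by gcongr; linarith

noncomputable def seriesTerm (α ε : ℝ) (m : ℕ) (f : Polynomial ℝ) (n : ℕ) : ℝ :=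
  exp (4 * α * ((n : ℝ) + 2) * ε) * cosh (2 * ((n : ℝ) + 1) * ε) ^ (-(m : ℤ)) *
    f.eval (tanh (2 * ((n : ℝ) + 2) * ε))

section seriesTerm

variable {α ε : ℝ} {s m : ℕ} {f : Polynomial ℝ}

lemma seriesTerm_nonneg (hε : 0 ≤ ε) (hf : ∀ i, 0 ≤ f.coeff i) (n : ℕ) :
    0 ≤ seriesTerm α ε m f n := by
  have := f.eval_nonneg_of_coeff_nonneg hf (tanh_nonneg (x := 2 * ((n : ℝ) + 2) * ε)
    (by positivity))
  unfold seriesTerm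
  positivity

lemma seriesTerm_le (hε : 0 ≤ ε) (hf : ∀ i, 0 ≤ f.coeff i) (hdeg : f.natDegree ≤ s) (n : ℕ) :
    seriesTerm α ε m f n ≤ 2 ^ s * exp (2 * α * ε) ^ 2 * f.eval (tanh ε) *
      (2 ^ s * exp (2 * α * ε) ^ 2 * ((cosh ε ^ m)⁻¹) ^ 2) ^ (n + 1) := by
  have hexp : exp (4 * α * ((n : ℝ) + 2) * ε) = exp (2 * α * ε) ^ (2 * (n + 2)) := by
    rw [← exp_nat_mul]; push_cast; ring_nf
  have hcosh :
      cosh (2 * ((n : ℝ) + 1) * ε) ^ (-(m : ℤ)) ≤ ((cosh ε ^ m)⁻¹) ^ (2 * (n + 1)) := by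
    rw [zpow_neg, zpow_natCast, inv_pow, ← pow_mul, mul_comm m, pow_mul]
    gcongr
    simpa using cosh_pow_le_cosh_natCast_mul ε (2 * (n + 1))
  have heval : f.eval (tanh (2 * ((n : ℝ) + 2) * ε)) ≤ (2 ^ s) ^ (n + 2) * f.eval (tanh ε) :=
    calc f.eval (tanh (2 * ((n : ℝ) + 2) * ε))
        ≤ ((2 * (n + 2) : ℕ) : ℝ) ^ s * f.eval (tanh ε) := by
          simpa using f.eval_tanh_natCast_mul_le hf hdeg hε (k := 2 * (n + 2)) (by omega)
      _ ≤ (2 ^ s) ^ (n + 2) * f.eval (tanh ε) := by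
          rw [← pow_mul, mul_comm s, pow_mul]
          gcongr
          · exact f.eval_nonneg_of_coeff_nonneg hf (tanh_nonneg hε)
          · exact_mod_cast two_mul_add_two_le_two_pow n
  calc seriesTerm α ε m f n
      ≤ exp (2 * α * ε) ^ (2 * (n + 2)) * ((cosh ε ^ m)⁻¹) ^ (2 * (n + 1)) *
          ((2 ^ s) ^ (n + 2) * f.eval (tanh ε)) := by
        unfold seriesTerm
        rw [hexp]
        gcongr
        exact f.eval_nonneg_of_coeff_nonneg hf (tanh_nonneg (by positivity))
    _ = _ := by ring

end seriesTerm

theorem stmt4_general (C α ε : ℝ) (hC : 0 < C) (hε : 0 < ε) (s : ℕ)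
    (m : ℕ) (hm : mConst C α ε s < m)
    (f : Polynomial ℝ) (hf : f ≠ 0) (hdeg : f.natDegree ≤ s) (hcoeff : ∀ i, 0 ≤ f.coeff i) :
    Summable (fun n : ℕ =>
      Real.exp (4 * α * ((n : ℝ) + 2) * ε) * Real.cosh (2 * ((n : ℝ) + 1) * ε) ^ (-(m : ℤ)) *
        f.eval (Real.tanh (2 * ((n : ℝ) + 2) * ε))) ∧
    C * ∑' n : ℕ,
        Real.exp (4 * α * ((n : ℝ) + 2) * ε) * Real.cosh (2 * ((n : ℝ) + 1) * ε) ^ (-(m : ℤ)) *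
          f.eval (Real.tanh (2 * ((n : ℝ) + 2) * ε)) <
      Real.cosh ε ^ (-(m : ℤ)) * f.eval (Real.tanh ε) := by
  obtain ⟨hq, hlt⟩ := geometric_ratio_lt_one_and_mul_lt hC.le (one_le_pow₀ one_le_two)
    (exp_pos _) (by positivity) (mul_inv_cosh_pow_lt_one_of_mConst_lt hC.le hε hm)
  set E := exp (2 * α * ε)
  set r := (cosh ε ^ m)⁻¹
  set F := f.eval (tanh ε)
  set q := 2 ^ s * E ^ 2 * r ^ 2
  have hF : 0 < F := f.eval_pos_of_coeff_nonneg hcoeff hf (tanh_pos hε)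
  obtain ⟨hsum, htsum⟩ := summable_and_tsum_le_of_le_geometric (a := seriesTerm α ε m f)
    (c := 2 ^ s * E ^ 2 * F * q)
    (seriesTerm_nonneg hε.le hcoeff) (by positivity) hq
    fun n => (seriesTerm_le hε.le hcoeff hdeg n).trans_eq (by ring)
  refine ⟨hsum, ?_⟩
  calc C * ∑' n, seriesTerm α ε m f n ≤ C * (2 ^ s * E ^ 2 * F * q / (1 - q)) := by gcongr
    _ = C * (2 ^ s * E ^ 2) * q / (1 - q) * F := by ring
    _ < r * F := by gcongr
    _ = cosh ε ^ (-(m : ℤ)) * F := by rw [zpow_neg, zpow_natCast]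

theorem stmt4 (C α ε : ℝ) (hC : 0 < C) (hα : 0 < α) (hε : 0 < ε) (s : ℕ)
    (m : ℕ) (hm : mConst C α ε s < m)
    (f : Polynomial ℝ) (hf : f ≠ 0) (hdeg : f.natDegree ≤ s) (hcoeff : ∀ i, 0 ≤ f.coeff i) :
    Summable (fun n : ℕ =>
      Real.exp (4 * α * ((n : ℝ) + 2) * ε) * Real.cosh (2 * ((n : ℝ) + 1) * ε) ^ (-(m : ℤ)) *
        f.eval (Real.tanh (2 * ((n : ℝ) + 2) * ε))) ∧
    C * ∑' n : ℕ,
        Real.exp (4 * α * ((n : ℝ) + 2) * ε) * Real.cosh (2 * ((n : ℝ) + 1) * ε) ^ (-(m : ℤ)) *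
          f.eval (Real.tanh (2 * ((n : ℝ) + 2) * ε)) <
      Real.cosh ε ^ (-(m : ℤ)) * f.eval (Real.tanh ε) :=
  stmt4_general C α ε hC hε s m hm f hf hdeg hcoeff
end

section
/- For every A ∈ SL(2,ℝ) with A ≠ I and A ≠ −I, there exists g ∈ SL(2,ℝ) such that ‖g⁻¹ A g‖ ≠ ‖A‖. -/
/-! The function `gnorm` is a strictly increasing function of the sum of squared entries, so it
suffices to conjugate `A` so that this sum grows. Conjugation by `aMat t = diag(eᵗ, e⁻ᵗ)` rescales
the off-diagonal entries `b, c` to `b e⁻²ᵗ, c e²ᵗ`; the gains at `t = 1` and `t = -1` add up to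
`(b² + c²)(2 cosh 4 - 2)`, so one of them is positive unless `A` is diagonal. A diagonal `A ≠ ±1`
has distinct diagonal entries `a ≠ d`, and conjugation by the shear `!![1, 1; 0, 1]` adds
`(a - d)²` to the sum. -/

open Real

noncomputable def uMat : SL2 :=
  ⟨!![1, 1; 0, 1], by simp [Matrix.det_fin_two_of]⟩

def entrySqSum (g : SL2) : ℝ :=
  g.1 0 0 ^ 2 + g.1 0 1 ^ 2 + g.1 1 0 ^ 2 + g.1 1 1 ^ 2

lemma two_le_entrySqSum (g : SL2) : 2 ≤ entrySqSum g := by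
  have hdet : g.1 0 0 * g.1 1 1 - g.1 0 1 * g.1 1 0 = 1 := by
    rw [← Matrix.det_fin_two]; exact g.2
  unfold entrySqSum
  nlinarith [sq_nonneg (g.1 0 0 - g.1 1 1), sq_nonneg (g.1 0 1 + g.1 1 0)]

lemma acosh_strictMonoOn : StrictMonoOn acosh (Set.Ici 1) := by
  intro x hx y _ hxy
  have hsqrt : √(x ^ 2 - 1) < √(y ^ 2 - 1) :=
    Real.sqrt_lt_sqrt (by nlinarith [Set.mem_Ici.mp hx]) (by nlinarith [Set.mem_Ici.mp hx])
  exact Real.log_lt_log (by linarith [Set.mem_Ici.mp hx, Real.sqrt_nonneg (x ^ 2 - 1)])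
    (by linarith)

lemma gnorm_ne_of_entrySqSum_lt {g h : SL2} (hgh : entrySqSum g < entrySqSum h) :
    gnorm h ≠ gnorm g := by
  have hg : 1 ≤ entrySqSum g / 2 := by linarith [two_le_entrySqSum g]
  have hh : 1 ≤ entrySqSum h / 2 := by linarith
  exact (acosh_strictMonoOn hg hh (by linarith)).ne'

lemma coe_inv_mul_mul (g A : SL2) :
    ((g⁻¹ * A * g : SL2) : Matrix (Fin 2) (Fin 2) ℝ) = g.1.adjugate * A.1 * g.1 := by
  simp [Matrix.SpecialLinearGroup.coe_inv]

lemma coe_inv_mul_mul_aMat (A : SL2) (t : ℝ) :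
    ((aMat t)⁻¹ * A * aMat t : SL2).1 =
      !![A.1 0 0, A.1 0 1 * exp (-t) ^ 2; A.1 1 0 * exp t ^ 2, A.1 1 1] := by
  rw [coe_inv_mul_mul, Matrix.eta_fin_two A.1]
  simp only [aMat, Matrix.adjugate_fin_two_of, Matrix.mul_fin_two, Real.exp_neg]
  ext i j; fin_cases i <;> fin_cases j <;> simp <;> field_simp

lemma coe_inv_mul_mul_uMat (A : SL2) :
    (uMat⁻¹ * A * uMat : SL2).1 =
      !![A.1 0 0 - A.1 1 0, A.1 0 0 + A.1 0 1 - A.1 1 0 - A.1 1 1; A.1 1 0, A.1 1 0 + A.1 1 1] := by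
  rw [coe_inv_mul_mul, Matrix.eta_fin_two A.1]
  simp only [uMat, Matrix.adjugate_fin_two_of, Matrix.mul_fin_two]
  ext i j; fin_cases i <;> fin_cases j <;> simp <;> ring

lemma entrySqSum_inv_mul_mul_aMat (A : SL2) (t : ℝ) :
    entrySqSum ((aMat t)⁻¹ * A * aMat t) =
      entrySqSum A + A.1 0 1 ^ 2 * (exp (-4 * t) - 1) + A.1 1 0 ^ 2 * (exp (4 * t) - 1) := by
  have hpow (s : ℝ) : exp (4 * s) = exp s ^ 4 := by exact_mod_cast Real.exp_nat_mul s 4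
  rw [show -4 * t = 4 * -t by ring, hpow, hpow]
  simp only [entrySqSum, coe_inv_mul_mul_aMat]
  simp only [Matrix.of_apply, Matrix.cons_val', Matrix.cons_val_zero, Matrix.cons_val_one,
    Matrix.empty_val', Matrix.cons_val_fin_one]
  ring

lemma exists_entrySqSum_lt_inv_mul_mul_aMat {A : SL2} (hA : A.1 0 1 ≠ 0 ∨ A.1 1 0 ≠ 0) :
    ∃ t, entrySqSum A < entrySqSum ((aMat t)⁻¹ * A * aMat t) := by
  simp only [entrySqSum_inv_mul_mul_aMat, lt_add_iff_pos_right, add_assoc]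
  by_contra! h
  have hbc : 0 < A.1 0 1 ^ 2 + A.1 1 0 ^ 2 := by
    rcases hA with hA | hA <;> positivity
  have hcosh : 1 < cosh 4 := Real.one_lt_cosh.mpr (by norm_num)
  rw [Real.cosh_eq] at hcosh
  have h1 := h 1
  have h2 := h (-1)
  norm_num at h1 h2
  nlinarith [mul_pos hbc (sub_pos.mpr hcosh)]

lemma apply_zero_zero_ne_apply_one_one {A : SL2} (hb : A.1 0 1 = 0) (hc : A.1 1 0 = 0)
    (h1 : A.1 ≠ 1) (h2 : A.1 ≠ -1) : A.1 0 0 ≠ A.1 1 1 := by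
  intro had
  have hdet : A.1 0 0 * A.1 1 1 = 1 := by
    have := A.2
    rwa [Matrix.det_fin_two, hb, hc, mul_zero, sub_zero] at this
  rw [← had] at hdet
  have hA : A.1 = !![A.1 0 0, 0; 0, A.1 0 0] := by rw [Matrix.eta_fin_two A.1, hb, hc, ← had]; rfl
  rcases mul_self_eq_one_iff.mp hdet with ha | ha
  · exact h1 (by rw [hA, ha, Matrix.one_fin_two])
  · exact h2 (by rw [hA, ha, Matrix.one_fin_two]; simp)

lemma entrySqSum_lt_inv_mul_mul_uMat {A : SL2} (hb : A.1 0 1 = 0) (hc : A.1 1 0 = 0)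
    (had : A.1 0 0 ≠ A.1 1 1) : entrySqSum A < entrySqSum (uMat⁻¹ * A * uMat) := by
  simp only [entrySqSum, coe_inv_mul_mul_uMat, Matrix.of_apply, Matrix.cons_val',
    Matrix.cons_val_zero, Matrix.cons_val_one, Matrix.empty_val', Matrix.cons_val_fin_one, hb, hc]
  nlinarith [sq_pos_of_ne_zero (sub_ne_zero.mpr had)]

lemma exists_entrySqSum_lt_inv_mul_mul {A : SL2} (h1 : A.1 ≠ 1) (h2 : A.1 ≠ -1) :
    ∃ g : SL2, entrySqSum A < entrySqSum (g⁻¹ * A * g) := by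
  by_cases hdiag : A.1 0 1 = 0 ∧ A.1 1 0 = 0
  · obtain ⟨hb, hc⟩ := hdiag
    exact ⟨uMat, entrySqSum_lt_inv_mul_mul_uMat hb hc
      (apply_zero_zero_ne_apply_one_one hb hc h1 h2)⟩
  · obtain ⟨t, ht⟩ := exists_entrySqSum_lt_inv_mul_mul_aMat (not_and_or.mp hdiag)
    exact ⟨aMat t, ht⟩

theorem stmt10 (A : SL2) (h1 : A.1 ≠ 1) (h2 : A.1 ≠ -1) :
    ∃ g : SL2, gnorm (g⁻¹ * A * g) ≠ gnorm A := by
  obtain ⟨g, hg⟩ := exists_entrySqSum_lt_inv_mul_mul h1 h2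
  exact ⟨g, gnorm_ne_of_entrySqSum_lt hg⟩
end
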